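/- If ‖x‖_2 ≤ 1, then ‖∇_β l(β,x)‖_2 ≤ √C, where l is the log-softmax loss over C classes. -/

import Mathlib

open scoped BigOperators
open scoped RealInnerProductSpace

noncomputable def logSoftmaxLoss {C d : ℕ} (x : EuclideanSpace ℝ (Fin d)) (y : Fin C)
    (β : EuclideanSpace ℝ (Fin C × Fin d)) : ℝ :=
  -Real.log (Real.exp (∑ j, β (y, j) * x j) /
    ∑ k : Fin C, Real.exp (∑ j, β (k, j) * x j))

section aux
variable {C d : ℕ} (x : EuclideanSpace ℝ (Fin d))

/-- k-th block embedding of x -/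
noncomputable def blockVec (k : Fin C) : EuclideanSpace ℝ (Fin C × Fin d) :=
  WithLp.toLp 2 (fun p : Fin C × Fin d => if p.1 = k then x p.2 else 0)

lemma inner_blockVec (k : Fin C) (β : EuclideanSpace ℝ (Fin C × Fin d)) :
    ⟪blockVec x k, β⟫ = ∑ j, β (k, j) * x j := by
  simp only [PiLp.inner_apply, RCLike.inner_apply, conj_trivial, blockVec]
  rw [Fintype.sum_prod_type]
  simp [mul_comm]

lemma piLp_sum_apply {ι κ : Type*} [Fintype ι] (s : Finset κ)
    (f : κ → EuclideanSpace ℝ ι) (p : ι) : (∑ k ∈ s, f k) p = ∑ k ∈ s, f k p := by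
  induction s using Finset.cons_induction with
  | empty => rfl
  | cons a s ha ih => rw [Finset.sum_cons, Finset.sum_cons, PiLp.add_apply, ih]

lemma loss_eq (y : Fin C) (β : EuclideanSpace ℝ (Fin C × Fin d)) :
    logSoftmaxLoss x y β =
      Real.log (∑ k : Fin C, Real.exp ⟪blockVec x k, β⟫) - ⟪blockVec x y, β⟫ := by
  have hS : 0 < ∑ k : Fin C, Real.exp (∑ j, β (k, j) * x j) :=
    Finset.sum_pos (fun k _ => Real.exp_pos _) ⟨y, Finset.mem_univ y⟩
  simp only [inner_blockVec, logSoftmaxLoss]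
  rw [Real.log_div (Real.exp_pos _).ne' hS.ne', Real.log_exp]
  ring

lemma hasGradientAt_loss (y : Fin C) (β : EuclideanSpace ℝ (Fin C × Fin d)) :
    HasGradientAt (logSoftmaxLoss x y)
      ((∑ k : Fin C, Real.exp ⟪blockVec x k, β⟫)⁻¹ •
        (∑ k : Fin C, Real.exp ⟪blockVec x k, β⟫ • blockVec x k) - blockVec x y) β := by
  have hS : 0 < ∑ k : Fin C, Real.exp ⟪blockVec x k, β⟫ :=
    Finset.sum_pos (fun k _ => Real.exp_pos _) ⟨y, Finset.mem_univ y⟩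
  rw [hasGradientAt_iff_hasFDerivAt]
  have h1 : ∀ k : Fin C, HasFDerivAt (fun b : EuclideanSpace ℝ (Fin C × Fin d) =>
      ⟪blockVec x k, b⟫) (innerSL ℝ (blockVec x k)) β := fun k =>
    (innerSL ℝ (blockVec x k)).hasFDerivAt
  have h3 : HasFDerivAt (fun b : EuclideanSpace ℝ (Fin C × Fin d) =>
      ∑ k : Fin C, Real.exp ⟪blockVec x k, b⟫)
      (∑ k : Fin C, Real.exp ⟪blockVec x k, β⟫ • innerSL ℝ (blockVec x k)) β :=
    HasFDerivAt.fun_sum fun k _ => (h1 k).exp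
  have h4 := (h3.log hS.ne').sub (h1 y)
  have hfun : logSoftmaxLoss x y = fun b =>
      Real.log (∑ k : Fin C, Real.exp ⟪blockVec x k, b⟫) - ⟪blockVec x y, b⟫ :=
    funext fun b => loss_eq x y b
  rw [hfun]
  refine h4.congr_fderiv ?_
  apply ContinuousLinearMap.ext
  intro w
  simp [InnerProductSpace.toDual_apply_apply, inner_sub_left, inner_smul_left, inner_sum,
    mul_comm]
end aux

set_option maxHeartbeats 1000000 in
theorem logSoftmaxLoss_gradient_norm_le_sqrt (C d : ℕ) (x : EuclideanSpace ℝ (Fin d)) (y : Fin C)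
    (hx : ‖x‖ ≤ 1) (β : EuclideanSpace ℝ (Fin C × Fin d)) :
    ‖gradient (logSoftmaxLoss x y) β‖ ≤ Real.sqrt C := by
  rw [(hasGradientAt_loss x y β).gradient]
  set S := ∑ k : Fin C, Real.exp ⟪blockVec x k, β⟫ with hSdef
  have hS : 0 < S := Finset.sum_pos (fun k _ => Real.exp_pos _) ⟨y, Finset.mem_univ y⟩
  set g := S⁻¹ • (∑ k : Fin C, Real.exp ⟪blockVec x k, β⟫ • blockVec x k) - blockVec x y with hg
  set c : Fin C → ℝ := fun k => S⁻¹ * Real.exp ⟪blockVec x k, β⟫ with hc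
  have hck : ∀ k, 0 ≤ c k ∧ c k ≤ 1 := by
    intro k
    refine ⟨by positivity, ?_⟩
    rw [hc]
    rw [inv_mul_le_iff₀ hS, mul_one]
    exact Finset.single_le_sum (f := fun i : Fin C => Real.exp ⟪blockVec x i, β⟫)
      (fun i _ => (Real.exp_pos _).le) (Finset.mem_univ k)
  have hgp : ∀ p : Fin C × Fin d, g p = (c p.1 - if p.1 = y then 1 else 0) * x p.2 := by
    intro p
    have h2 : (∑ k : Fin C, Real.exp ⟪blockVec x k, β⟫ • blockVec x k) p
        = ∑ k : Fin C, Real.exp ⟪blockVec x k, β⟫ * blockVec x k p := by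
      rw [piLp_sum_apply Finset.univ
        (fun k => Real.exp ⟪blockVec x k, β⟫ • blockVec x k) p]
      exact Finset.sum_congr rfl fun k _ => rfl
    have h3 : ∀ b ∈ Finset.univ, b ≠ p.1 → Real.exp ⟪blockVec x b, β⟫ * blockVec x b p = 0 := by
      intro b _ hb
      have : blockVec x b p = 0 := if_neg (fun h => hb (h.symm : b = p.1)) -- p.1 = b false
      rw [this, mul_zero]
    have h4 : blockVec x p.1 p = x p.2 := if_pos rfl
    have h5 : blockVec x y p = (if p.1 = y then 1 else 0) * x p.2 := by
      show (if p.1 = y then x p.2 else 0) = _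
      split <;> ring
    simp only [hg, PiLp.sub_apply, PiLp.smul_apply, h2, smul_eq_mul]
    rw [Finset.sum_eq_single (f := fun k : Fin C => Real.exp ⟪blockVec x k, β⟫ * blockVec x k p)
      p.1 h3 (by simp), h4, h5, hc]
    ring
  have hnorm : ‖g‖ = Real.sqrt (∑ p : Fin C × Fin d, ‖g p‖ ^ 2) := EuclideanSpace.norm_eq g
  rw [hnorm]
  apply Real.sqrt_le_sqrt
  have hxsum : ∑ j, x j ^ 2 ≤ 1 := by
    have h1 : ‖x‖ ^ 2 ≤ 1 := by nlinarith [norm_nonneg x]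
    have h2 : ‖x‖ ^ 2 = ∑ j, x j ^ 2 := by
      rw [EuclideanSpace.norm_eq, Real.sq_sqrt (by positivity)]
      exact Finset.sum_congr rfl fun j _ => by rw [Real.norm_eq_abs, sq_abs]
    linarith [h2 ▸ h1]
  calc ∑ p : Fin C × Fin d, ‖g p‖ ^ 2
      = ∑ k : Fin C, (c k - if k = y then 1 else 0) ^ 2 * ∑ j, x j ^ 2 := by
        rw [Fintype.sum_prod_type]
        refine Finset.sum_congr rfl fun k _ => ?_
        rw [Finset.mul_sum]
        refine Finset.sum_congr rfl fun j _ => ?_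
        rw [hgp (k, j)]
        rw [Real.norm_eq_abs, sq_abs]
        ring
    _ ≤ ∑ k : Fin C, 1 := by
        refine Finset.sum_le_sum fun k _ => ?_
        have h1 : (c k - if k = y then 1 else 0) ^ 2 ≤ 1 := by
          have := hck k
          split <;> nlinarith [this.1, this.2]
        nlinarith [sq_nonneg (c k - if k = y then 1 else 0), hxsum,
          Finset.sum_nonneg (fun j _ => sq_nonneg (x j) : ∀ j ∈ Finset.univ, (0:ℝ) ≤ x j ^ 2)]
    _ = C := by simp
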